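/- arXiv:1908.08576 — 2 statements merged into one kernel-verified Lean document; each statement's English description precedes it below -/
import Mathlib

section
/- If f : ℝⁿ → ℝ is differentiable with L-Lipschitz continuous gradient, then for all points z1, z2, z3 in ℝⁿ, f(z2) ≤ f(z1) + ⟨z2 - z1, ∇f(z3)⟩ + (L/2)‖z2 - z3‖². -/
/-!
Along the segment from `z3` to `z2` the Lipschitz gradient bounds `f z2` above by the tangent
plane at `z3` plus `(L/2)‖z2 - z3‖²` (the descent lemma), while convexity puts `f z1` above the
same tangent plane. Adding the two inequalities eliminates `f z3`.
-/

open RealInnerProductSpace AffineMap Set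

variable {E : Type*} [NormedAddCommGroup E] [InnerProductSpace ℝ E] [CompleteSpace E]
  {f : E → ℝ} {x y : E}

theorem HasGradientAt.hasDerivAt_comp_lineMap {g : E} {t : ℝ}
    (hf : HasGradientAt f g (lineMap x y t)) :
    HasDerivAt (f ∘ lineMap x y) ⟪g, y - x⟫ t := by
  simpa using hf.hasFDerivAt.comp_hasDerivAt t hasDerivAt_lineMap

theorem ConvexOn.add_inner_gradient_le (hconv : ConvexOn ℝ univ f) (hf : DifferentiableAt ℝ f x)
    (y : E) : f x + ⟪gradient f x, y - x⟫ ≤ f y := by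
  have hline : ConvexOn ℝ univ (f ∘ lineMap (k := ℝ) x y) := hconv.comp_affineMap _
  have hderiv : HasDerivAt (f ∘ lineMap x y) ⟪gradient f x, y - x⟫ (0 : ℝ) :=
    HasGradientAt.hasDerivAt_comp_lineMap (by rw [lineMap_apply_zero]; exact hf.hasGradientAt)
  have hslope := hline.le_slope_of_hasDerivAt (mem_univ 0) (mem_univ 1) zero_lt_one hderiv
  simp only [slope_def_field, Function.comp_apply, lineMap_apply_zero, lineMap_apply_one,
    sub_zero, div_one] at hslope
  linarith

theorem Differentiable.le_add_inner_gradient_add_sq_of_lipschitz_gradient {L : ℝ}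
    (hf : Differentiable ℝ f) (hlip : ∀ x y, ‖gradient f x - gradient f y‖ ≤ L * ‖x - y‖)
    (x y : E) : f y ≤ f x + ⟪gradient f x, y - x⟫ + L / 2 * ‖y - x‖ ^ 2 := by
  set φ : ℝ → ℝ := fun t =>
    (f ∘ lineMap x y) t - t * ⟪gradient f x, y - x⟫ - L / 2 * ‖y - x‖ ^ 2 * t ^ 2
  set φ' : ℝ → ℝ := fun t =>
    ⟪gradient f (lineMap x y t) - gradient f x, y - x⟫ - L * ‖y - x‖ ^ 2 * t
  have hφ : ∀ t, HasDerivAt φ (φ' t) t := by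
    intro t
    refine ((((hf (lineMap x y t)).hasGradientAt.hasDerivAt_comp_lineMap).sub
      ((hasDerivAt_id t).mul_const ⟪gradient f x, y - x⟫)).sub
      ((hasDerivAt_pow 2 t).const_mul (L / 2 * ‖y - x‖ ^ 2))).congr_deriv ?_
    simp only [φ', inner_sub_left]
    norm_num
    ring
  have hφ'_nonpos : ∀ t, 0 ≤ t → φ' t ≤ 0 := by
    intro t ht
    have hgrad : ⟪gradient f (lineMap x y t) - gradient f x, y - x⟫ ≤ L * ‖y - x‖ ^ 2 * t :=
      calc _ ≤ ‖gradient f (lineMap x y t) - gradient f x‖ * ‖y - x‖ := real_inner_le_norm _ _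
        _ ≤ L * ‖lineMap x y t - x‖ * ‖y - x‖ := by gcongr; exact hlip _ _
        _ = L * ‖y - x‖ ^ 2 * t := by
          rw [← vsub_eq_sub (lineMap x y t), lineMap_vsub_left, norm_smul, Real.norm_of_nonneg ht,
            vsub_eq_sub]
          ring
    simp only [φ']
    linarith
  have hanti : AntitoneOn φ (Icc 0 1) :=
    antitoneOn_of_hasDerivWithinAt_nonpos (convex_Icc 0 1)
      (fun t _ => (hφ t).continuousAt.continuousWithinAt)
      (fun t _ => (hφ t).hasDerivWithinAt)
      (fun t ht => hφ'_nonpos t (by rw [interior_Icc] at ht; exact ht.1.le))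
  have hφ01 := hanti (left_mem_Icc.2 zero_le_one) (right_mem_Icc.2 zero_le_one) zero_le_one
  simp only [φ, Function.comp_apply, lineMap_apply_zero, lineMap_apply_one] at hφ01
  linarith

theorem stmt0_general {n : ℕ} (f : EuclideanSpace ℝ (Fin n) → ℝ) (L : ℝ)
    (hconv : ConvexOn ℝ Set.univ f)
    (hdiff : Differentiable ℝ f)
    (hlip : ∀ x y, ‖gradient f x - gradient f y‖ ≤ L * ‖x - y‖) :
    ∀ z1 z2 z3 : EuclideanSpace ℝ (Fin n),
      f z2 ≤ f z1 + ⟪z2 - z1, gradient f z3⟫ + (L / 2) * ‖z2 - z3‖ ^ 2 := by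
  intro z1 z2 z3
  have hdescent := hdiff.le_add_inner_gradient_add_sq_of_lipschitz_gradient hlip z3 z2
  have hsupport := hconv.add_inner_gradient_le (hdiff z3) z1
  have hsplit : ⟪z2 - z1, gradient f z3⟫ =
      ⟪gradient f z3, z2 - z3⟫ - ⟪gradient f z3, z1 - z3⟫ := by
    rw [real_inner_comm, ← inner_sub_right, sub_sub_sub_cancel_right]
  linarith

theorem stmt0 {n : ℕ} (f : EuclideanSpace ℝ (Fin n) → ℝ) (L : ℝ) (hL : 0 ≤ L)
    (hconv : ConvexOn ℝ Set.univ f)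
    (hdiff : Differentiable ℝ f)
    (hlip : ∀ x y, ‖gradient f x - gradient f y‖ ≤ L * ‖x - y‖) :
    ∀ z1 z2 z3 : EuclideanSpace ℝ (Fin n),
      f z2 ≤ f z1 + ⟪z2 - z1, gradient f z3⟫ + (L / 2) * ‖z2 - z3‖ ^ 2 :=
  stmt0_general f L hconv hdiff hlip
end

section
/- Let G₁ be the N×N block matrix with diagonal blocks Pᵢ - ρAᵢᵀAᵢ and off-diagonal blocks -ρAᵢᵀAⱼ, where ‖AᵢᵀAⱼ‖ ≤ √n for i ≠ j, Pᵢ = τᵢI, AᵢᵀAᵢ = dᵢI. If τᵢ > ρdᵢ + 4(N-1)ρ√n for each i, then for all block vectors W = (w₁,…,w_N): Σᵢ wᵢᵀ(Pᵢ - ρAᵢᵀAᵢ)wᵢ - ρΣᵢΣ_{j≠i} wᵢᵀAᵢᵀAⱼwⱼ ≥ 0. -/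
open RealInnerProductSpace Matrix

theorem stmt11 {n N m : ℕ} (A : Fin N → Matrix (Fin m) (Fin n) ℝ)
    (d τ : Fin N → ℝ) (ρ : ℝ) (hρ : 0 < ρ)
    (hd : ∀ i, 0 ≤ d i)
    (hAA : ∀ i, (A i)ᵀ * (A i) = d i • (1 : Matrix (Fin n) (Fin n) ℝ))
    (hcross : ∀ i j, i ≠ j →
      ‖Matrix.toEuclideanCLM (𝕜 := ℝ) ((A i)ᵀ * (A j))‖ ≤ Real.sqrt n)
    (hτ : ∀ i, τ i > ρ * d i + 4 * ((N : ℝ) - 1) * ρ * Real.sqrt n)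
    (w : Fin N → EuclideanSpace ℝ (Fin n)) :
    0 ≤ (∑ i, (τ i * ‖w i‖ ^ 2 -
            ρ * ⟪w i, Matrix.toEuclideanCLM (𝕜 := ℝ) ((A i)ᵀ * (A i)) (w i)⟫)) -
        ρ * ∑ i, ∑ j ∈ Finset.univ.filter (· ≠ i),
            ⟪w i, Matrix.toEuclideanCLM (𝕜 := ℝ) ((A i)ᵀ * (A j)) (w j)⟫ := by
  classical
  set s := Real.sqrt n with hs
  have hs0 : 0 ≤ s := Real.sqrt_nonneg n
  set S := ∑ i, ‖w i‖ ^ 2 with hS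
  have hS0 : 0 ≤ S := Finset.sum_nonneg fun i _ => sq_nonneg _
  have hdiag : ∀ i, ⟪w i, Matrix.toEuclideanCLM (𝕜 := ℝ) ((A i)ᵀ * (A i)) (w i)⟫
      = d i * ‖w i‖ ^ 2 := by
    intro i
    rw [hAA i, _root_.map_smul, _root_.map_one]
    rw [ContinuousLinearMap.smul_apply, ContinuousLinearMap.one_apply,
      real_inner_smul_right, real_inner_self_eq_norm_sq]
  have hc : ∀ i j, i ≠ j →
      ⟪w i, Matrix.toEuclideanCLM (𝕜 := ℝ) ((A i)ᵀ * (A j)) (w j)⟫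
        ≤ s * (‖w i‖ ^ 2 + ‖w j‖ ^ 2) / 2 := by
    intro i j hij
    set T := Matrix.toEuclideanCLM (𝕜 := ℝ) ((A i)ᵀ * (A j)) with hT
    have h1 : ⟪w i, T (w j)⟫ ≤ ‖w i‖ * ‖T (w j)‖ := real_inner_le_norm _ _
    have h2 : ‖T (w j)‖ ≤ ‖T‖ * ‖w j‖ := T.le_opNorm _
    have h3 : ‖T‖ ≤ s := hcross i j hij
    nlinarith [norm_nonneg (w i), norm_nonneg (w j), norm_nonneg (T (w j)),
      sq_nonneg (‖w i‖ - ‖w j‖), mul_nonneg (norm_nonneg (w i)) (norm_nonneg (w j)),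
      norm_nonneg T]
  have hinner : ∀ i, ∑ j ∈ Finset.univ.filter (· ≠ i), (s * (‖w i‖ ^ 2 + ‖w j‖ ^ 2) / 2)
      = s * (((N : ℝ) - 1) * ‖w i‖ ^ 2 + (S - ‖w i‖ ^ 2)) / 2 := by
    intro i
    have hN1 : (1 : ℕ) ≤ N := i.pos
    have hfe : Finset.univ.filter (· ≠ i) = Finset.univ.erase i := by
      ext j; simp [Finset.mem_erase]
    rw [hfe, ← Finset.sum_div, ← Finset.mul_sum]
    congr 2
    rw [Finset.sum_add_distrib, Finset.sum_const,
      Finset.card_erase_of_mem (Finset.mem_univ i), Finset.card_univ, Fintype.card_fin,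
      Finset.sum_erase_eq_sub (Finset.mem_univ i), ← hS, nsmul_eq_mul,
      Nat.cast_sub hN1]
    push_cast
    ring
  have hCS : (∑ i, ∑ j ∈ Finset.univ.filter (· ≠ i),
      ⟪w i, Matrix.toEuclideanCLM (𝕜 := ℝ) ((A i)ᵀ * (A j)) (w j)⟫)
      ≤ s * ((N : ℝ) - 1) * S := by
    calc (∑ i, ∑ j ∈ Finset.univ.filter (· ≠ i),
          ⟪w i, Matrix.toEuclideanCLM (𝕜 := ℝ) ((A i)ᵀ * (A j)) (w j)⟫)
        ≤ ∑ i, s * (((N : ℝ) - 1) * ‖w i‖ ^ 2 + (S - ‖w i‖ ^ 2)) / 2 := by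
          apply Finset.sum_le_sum
          intro i _
          rw [← hinner i]
          exact Finset.sum_le_sum fun j hj =>
            hc i j (Ne.symm (Finset.mem_filter.mp hj).2)
      _ = ∑ i, ((s * ((N : ℝ) - 2) / 2) * ‖w i‖ ^ 2 + (s / 2) * S) :=
          Finset.sum_congr rfl fun i _ => by ring
      _ = (s * ((N : ℝ) - 2) / 2) * S + (N : ℝ) * ((s / 2) * S) := by
          rw [Finset.sum_add_distrib, ← Finset.mul_sum, ← hS, Finset.sum_const,
            Finset.card_univ, Fintype.card_fin, nsmul_eq_mul]
      _ = s * ((N : ℝ) - 1) * S := by ring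
  have hmain : 4 * ((N : ℝ) - 1) * ρ * s * S
      ≤ ∑ i, (τ i * ‖w i‖ ^ 2 - ρ * (d i * ‖w i‖ ^ 2)) := by
    rw [hS, Finset.mul_sum]
    apply Finset.sum_le_sum
    intro i _
    have := hτ i
    nlinarith [sq_nonneg ‖w i‖]
  have hNS : 0 ≤ ((N : ℝ) - 1) * S := by
    rcases Nat.eq_zero_or_pos N with h | h
    · subst h
      have : S = 0 := by rw [hS]; simp
      rw [this]; simp
    · have h1 : (1 : ℝ) ≤ (N : ℝ) := by exact_mod_cast h
      exact mul_nonneg (by linarith) hS0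
  have hdsum : (∑ i, (τ i * ‖w i‖ ^ 2 -
      ρ * ⟪w i, Matrix.toEuclideanCLM (𝕜 := ℝ) ((A i)ᵀ * (A i)) (w i)⟫))
      = ∑ i, (τ i * ‖w i‖ ^ 2 - ρ * (d i * ‖w i‖ ^ 2)) :=
    Finset.sum_congr rfl fun i _ => by rw [hdiag i]
  rw [hdsum]
  have hρC : ρ * (∑ i, ∑ j ∈ Finset.univ.filter (· ≠ i),
      ⟪w i, Matrix.toEuclideanCLM (𝕜 := ℝ) ((A i)ᵀ * (A j)) (w j)⟫)
      ≤ ρ * (s * ((N : ℝ) - 1) * S) := mul_le_mul_of_nonneg_left hCS hρ.le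
  nlinarith [mul_nonneg (mul_nonneg hρ.le hs0) hNS]
end
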